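/- arXiv:2311.03815 — 3 statements merged into one kernel-verified Lean document; each statement's English description precedes it below -/
import Mathlib

section
/- Suppose a·T̃ ≤ N ≤ a·T̃ + b·T̃·B̃ and N·Δb/(b·Δt) ≥ T̃². Then the boundary point (T̃, (N − a·T̃)/(b·T̃)) belongs to the feasible set F, and it is the unique minimizer of the cost c(x, y) = Δt·x + Δb·y over F. -/
/-- The feasible set
`F = {(x, y) : 0 < x ≤ T̃, 0 ≤ y ≤ B̃, a·x + b·x·y = N}`. -/
def feasibleSet (a b N T B : ℝ) : Set (ℝ × ℝ) :=
  {p : ℝ × ℝ | 0 < p.1 ∧ p.1 ≤ T ∧ 0 ≤ p.2 ∧ p.2 ≤ B ∧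
    a * p.1 + b * p.1 * p.2 = N}

/-- The resource-cost objective `c(x, y) = Δt·x + Δb·y`. -/
def resourceCost (Δt Δb : ℝ) (p : ℝ × ℝ) : ℝ :=
  Δt * p.1 + Δb * p.2

/-! On `F` the workload constraint gives `y = (N - a x)/(b x)`, so the cost along `F` is
`Δt x + (Δb N / b) / x` up to a constant. The map `x ↦ c x + K / x` decreases strictly as long as
`c x² ≤ K`, and the hypothesis `T̃² ≤ N Δb / (b Δt)` says that this holds on all of `(0, T̃]`;
hence the cost is smallest exactly at `x = T̃`. -/

theorem strictAntiOn_mul_add_div {c K t : ℝ} (hc : 0 < c) (hK : c * t ^ 2 ≤ K) :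
    StrictAntiOn (fun x => c * x + K / x) (Set.Ioc 0 t) := by
  rintro x ⟨hx, -⟩ y ⟨hy, hyt⟩ hxy
  have hxy_lt_K : c * (x * y) < K := by
    calc c * (x * y) < c * (y * y) := by gcongr
      _ ≤ c * (t * t) := by gcongr; linarith
      _ = c * t ^ 2 := by ring
      _ ≤ K := hK
  have hdiff : (c * x + K / x) - (c * y + K / y) = (y - x) * (K - c * (x * y)) / (x * y) := by
    field_simp
    ring
  have hdiff_pos : 0 < (y - x) * (K - c * (x * y)) / (x * y) := by
    apply div_pos (mul_pos _ _) (mul_pos hx hy) <;> linarith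
  show c * y + K / y < c * x + K / x
  linarith

theorem snd_eq_of_mem_feasibleSet {a b N T B : ℝ} {p : ℝ × ℝ} (hb : b ≠ 0)
    (hp : p ∈ feasibleSet a b N T B) : p.2 = (N - a * p.1) / (b * p.1) := by
  obtain ⟨hx, -, -, -, hwork⟩ := hp
  rw [eq_div_iff (mul_ne_zero hb hx.ne')]
  linarith

theorem resourceCost_of_workload (Δt Δb a b N x : ℝ) (hb : b ≠ 0) (hx : x ≠ 0) :
    resourceCost Δt Δb (x, (N - a * x) / (b * x)) =
      (Δt * x + Δb * N / b / x) - Δb * a / b := by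
  simp only [resourceCost]
  field_simp
  ring

theorem boundaryPoint_mem_feasibleSet {a b N T B : ℝ} (hb : 0 < b) (hT : 0 < T)
    (h1 : a * T ≤ N) (h2 : N ≤ a * T + b * T * B) :
    (T, (N - a * T) / (b * T)) ∈ feasibleSet a b N T B := by
  have hbT : 0 < b * T := by positivity
  refine ⟨hT, le_rfl, div_nonneg (by linarith) hbT.le, ?_, ?_⟩
  · rw [div_le_iff₀ hbT]
    linarith
  · dsimp only
    field_simp
    ring

theorem boundary_point_unique_minimizer_general
    (Δt Δb a b N T B : ℝ) (hΔt : 0 < Δt)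
    (hb : 0 < b) (hT : 0 < T)
    (h1 : a * T ≤ N) (h2 : N ≤ a * T + b * T * B)
    (h3 : T ^ 2 ≤ N * Δb / (b * Δt)) :
    (T, (N - a * T) / (b * T)) ∈ feasibleSet a b N T B ∧
    (∀ p ∈ feasibleSet a b N T B, p ≠ (T, (N - a * T) / (b * T)) →
      resourceCost Δt Δb (T, (N - a * T) / (b * T))
        < resourceCost Δt Δb p) := by
  refine ⟨boundaryPoint_mem_feasibleSet hb hT h1 h2, ?_⟩
  rintro ⟨x, y⟩ hp hne
  have hy : y = (N - a * x) / (b * x) := snd_eq_of_mem_feasibleSet hb.ne' hp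
  obtain ⟨hx, hxT, -⟩ : 0 < x ∧ x ≤ T ∧ _ := hp
  have hxT : x < T := hxT.lt_of_ne fun h => hne (by rw [hy, h])
  have hK : Δt * T ^ 2 ≤ Δb * N / b := by
    rw [le_div_iff₀ (by positivity)] at h3
    rw [le_div_iff₀ hb]
    linarith
  have hdecr : Δt * T + Δb * N / b / T < Δt * x + Δb * N / b / x :=
    strictAntiOn_mul_add_div hΔt hK ⟨hx, hxT.le⟩ ⟨hT, le_rfl⟩ hxT
  rw [hy, resourceCost_of_workload _ _ _ _ _ _ hb.ne' hT.ne',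
    resourceCost_of_workload _ _ _ _ _ _ hb.ne' hx.ne']
  linarith

/-- Suppose `a·T̃ ≤ N ≤ a·T̃ + b·T̃·B̃` and
`N·Δb/(b·Δt) ≥ T̃²`. Then the boundary point `(T̃, (N − a·T̃)/(b·T̃))`
belongs to `F` and is the unique minimizer of `c` over `F`. -/
theorem boundary_point_unique_minimizer
    (Δt Δb a b N T B : ℝ) (hΔt : 0 < Δt) (hΔb : 0 < Δb)
    (ha : 0 < a) (hb : 0 < b) (hN : 0 < N) (hT : 0 < T) (hB : 0 < B)
    (h1 : a * T ≤ N) (h2 : N ≤ a * T + b * T * B)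
    (h3 : T ^ 2 ≤ N * Δb / (b * Δt)) :
    (T, (N - a * T) / (b * T)) ∈ feasibleSet a b N T B ∧
    (∀ p ∈ feasibleSet a b N T B, p ≠ (T, (N - a * T) / (b * T)) →
      resourceCost Δt Δb (T, (N - a * T) / (b * T))
        < resourceCost Δt Δb p) :=
  boundary_point_unique_minimizer_general Δt Δb a b N T B hΔt hb hT h1 h2 h3
end

section
/- Suppose a²·Δb/(b·Δt) ≤ N, N ≤ T̃²·b·Δt/Δb, and N ≤ (a + b·B̃)²·Δb/(b·Δt). Then the interior point (x₁, y₁) with x₁ = √(N·Δb/(b·Δt)) and y₁ = (√(N·b·Δt/Δb) − a)/b belongs to the feasible set F, and it is the unique minimizer of the cost c(x, y) = Δt·x + Δb·y over F. -/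
/-! On the constraint curve `a x + b x y = N` the second coordinate is `y = (N / x - a) / b`, so the
cost becomes `Δt x + K / x - Δb a / b` with `K = Δb N / b`. The identity
`Δt x + K / x - (Δt x₁ + K / x₁) = Δt (x - x₁)² / x`, valid when `Δt x₁² = K`, shows that this
function of `x > 0` is strictly minimised at `x₁ = √(K / Δt)`. The three hypotheses on `N` say
exactly that `x₁ ≤ T̃` and that the matching `y₁` lies in `[0, B̃]`. -/

open Real

lemma snd_eq_of_mul_add_mul_mul_eq {a b N x y : ℝ} (hb : b ≠ 0) (hx : x ≠ 0)
    (h : a * x + b * x * y = N) : y = (N / x - a) / b := by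
  rw [← h]
  field_simp
  ring

lemma resourceCost_on_constraint (Δt Δb a b N x : ℝ) :
    resourceCost Δt Δb (x, (N / x - a) / b) = Δt * x + Δb * N / b / x - Δb * a / b := by
  simp only [resourceCost]
  ring

lemma mul_add_div_lt_of_ne {c K x₀ x : ℝ} (hc : 0 < c) (hK : c * x₀ ^ 2 = K)
    (hx : 0 < x) (hne : x ≠ x₀) : c * x₀ + K / x₀ < c * x + K / x := by
  have key : c * x + K / x - (c * x₀ + K / x₀) = c * (x - x₀) ^ 2 / x := by
    subst hK
    field_simp
    ring
  have : 0 < c * (x - x₀) ^ 2 / x := by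
    have := sub_ne_zero.mpr hne
    positivity
  linarith

lemma mk_mem_feasibleSet {a b N T B x s : ℝ} (hb : 0 < b) (hx : 0 < x) (hxT : x ≤ T)
    (has : a ≤ s) (hsB : s ≤ a + b * B) (hxs : x * s = N) :
    (x, (s - a) / b) ∈ feasibleSet a b N T B := by
  refine ⟨hx, hxT, div_nonneg (sub_nonneg.mpr has) hb.le, ?_, ?_⟩
  · rw [div_le_iff₀ hb]
    linarith
  · dsimp only
    rw [← hxs]
    field_simp
    ring

/-- Suppose `a²·Δb/(b·Δt) ≤ N`, `N ≤ T̃²·b·Δt/Δb` and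
`N ≤ (a + b·B̃)²·Δb/(b·Δt)`. Then the interior point `(x₁, y₁)` with
`x₁ = √(N·Δb/(b·Δt))` and `y₁ = (√(N·b·Δt/Δb) − a)/b` belongs to `F` and
is the unique minimizer of `c` over `F`. -/
theorem interior_point_unique_minimizer
    (Δt Δb a b N T B : ℝ) (hΔt : 0 < Δt) (hΔb : 0 < Δb)
    (ha : 0 < a) (hb : 0 < b) (hN : 0 < N) (hT : 0 < T) (hB : 0 < B)
    (h1 : a ^ 2 * Δb / (b * Δt) ≤ N)
    (h2 : N ≤ T ^ 2 * b * Δt / Δb)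
    (h3 : N ≤ (a + b * B) ^ 2 * Δb / (b * Δt)) :
    (Real.sqrt (N * Δb / (b * Δt)),
      (Real.sqrt (N * b * Δt / Δb) - a) / b) ∈ feasibleSet a b N T B ∧
    (∀ p ∈ feasibleSet a b N T B,
      p ≠ (Real.sqrt (N * Δb / (b * Δt)),
            (Real.sqrt (N * b * Δt / Δb) - a) / b) →
      resourceCost Δt Δb
          (Real.sqrt (N * Δb / (b * Δt)),
            (Real.sqrt (N * b * Δt / Δb) - a) / b)
        < resourceCost Δt Δb p) := by
  set x₁ := √(N * Δb / (b * Δt))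
  set s := √(N * b * Δt / Δb)
  have hbΔt : 0 < b * Δt := mul_pos hb hΔt
  have hx₁ : 0 < x₁ := sqrt_pos.mpr (by positivity)
  have hx₁s : x₁ * s = N := by
    rw [← sqrt_mul (by positivity),
      show N * Δb / (b * Δt) * (N * b * Δt / Δb) = N ^ 2 by field_simp, sqrt_sq hN.le]
  have hK : Δt * x₁ ^ 2 = Δb * N / b := by
    rw [sq_sqrt (by positivity)]
    field_simp
  have hx₁T : x₁ ≤ T := (sqrt_le_left hT.le).mpr <| by
    rw [le_div_iff₀ hΔb] at h2; rw [div_le_iff₀ hbΔt]; linarith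
  have has : a ≤ s := (le_sqrt' ha).mpr <| by
    rw [div_le_iff₀ hbΔt] at h1; rw [le_div_iff₀ hΔb]; linarith
  have hsB : s ≤ a + b * B := (sqrt_le_left (by positivity)).mpr <| by
    rw [le_div_iff₀ hbΔt] at h3; rw [div_le_iff₀ hΔb]; linarith
  refine ⟨mk_mem_feasibleSet hb hx₁ hx₁T has hsB hx₁s, ?_⟩
  rintro ⟨x, y⟩ ⟨hx, -, -, -, hxy⟩ hne
  dsimp only at hx hxy
  obtain rfl := snd_eq_of_mul_add_mul_mul_eq hb.ne' hx.ne' hxy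
  have hs : s = N / x₁ := eq_div_of_mul_eq hx₁.ne' (by rw [mul_comm, hx₁s])
  have hxx₁ : x ≠ x₁ := by
    rintro rfl
    exact hne (by rw [hs])
  rw [hs, resourceCost_on_constraint, resourceCost_on_constraint]
  linarith [mul_add_div_lt_of_ne hΔt hK hx hxx₁]
end

section
/- (Constrained universal resource scheduling.) Whenever the workload N satisfies 0 < N ≤ a·T̃ + b·T̃·B̃, the resource cost c(x, y) = Δt·x + Δb·y attains its minimum over the feasible set F, and the minimizer is unique: there exists exactly one point (x*, y*) ∈ F with c(x*, y*) ≤ c(x, y) for all (x, y) ∈ F. -/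
/-!
On `F` the workload constraint solves for the frequency, `y = (N - a x) / (b x)`, and the bounds
`0 ≤ y ≤ B̃` become `a x ≤ N` and `N ≤ (a + b B̃) x`. So `F` is the graph of this function over a
compact interval of times, which contains `N / (a + b B̃)`. Along the graph the cost is
`Δt x + (Δb N / b) / x - Δb a / b`, strictly convex in `x > 0`, and a continuous strictly convex
function on a nonempty compact interval has exactly one minimizer.
-/

open Set

theorem StrictConvexOn.const_mul_of_pos {𝕜 E : Type*} [Field 𝕜] [LinearOrder 𝕜]
    [IsStrictOrderedRing 𝕜] [AddCommMonoid E] [SMul 𝕜 E] {s : Set E} {f : E → 𝕜} {c : 𝕜}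
    (hc : 0 < c) (hf : StrictConvexOn 𝕜 s f) : StrictConvexOn 𝕜 s fun x => c * f x := by
  refine ⟨hf.1, fun x hx y hy hxy μ ν hμ hν hμν => ?_⟩
  calc c * f (μ • x + ν • y) < c * (μ • f x + ν • f y) :=
        mul_lt_mul_of_pos_left (hf.2 hx hy hxy hμ hν hμν) hc
    _ = μ • (c * f x) + ν • (c * f y) := by simp only [smul_eq_mul]; ring

theorem StrictConvexOn.existsUnique_isMinOn {E : Type*} [AddCommMonoid E] [SMul ℝ E]
    [TopologicalSpace E] {s : Set E} {f : E → ℝ} (hf : StrictConvexOn ℝ s f)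
    (hcont : ContinuousOn f s) (hs : IsCompact s) (hne : s.Nonempty) :
    ∃! x, x ∈ s ∧ IsMinOn f s x := by
  obtain ⟨x, hx, hmin⟩ := hs.exists_isMinOn hne hcont
  exact ⟨x, ⟨hx, hmin⟩, fun y ⟨hy, hymin⟩ => hf.eq_of_isMinOn hymin hmin hy hx⟩

theorem existsUnique_isMinOn_of_mem_iff_graph {α β γ : Type*} [Preorder γ] {s : Set α}
    {F : Set (α × β)} {φ : α → β} {c : α × β → γ} (hF : ∀ p, p ∈ F ↔ p.1 ∈ s ∧ p.2 = φ p.1)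
    (h : ∃! x, x ∈ s ∧ IsMinOn (fun x => c (x, φ x)) s x) :
    ∃! p, p ∈ F ∧ IsMinOn c F p := by
  have graph_eq : ∀ p ∈ F, p = (p.1, φ p.1) := fun p hp => Prod.ext rfl ((hF p).1 hp).2
  have graph_mem : ∀ x ∈ s, (x, φ x) ∈ F := fun x hx => (hF _).2 ⟨hx, rfl⟩
  obtain ⟨x, ⟨hx, hmin⟩, huniq⟩ := h
  refine ⟨(x, φ x), ⟨graph_mem x hx, fun q hq => ?_⟩, fun q ⟨hq, hqmin⟩ => ?_⟩
  · rw [graph_eq q hq]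
    exact hmin ((hF q).1 hq).1
  · have hqmin' : IsMinOn c F (q.1, φ q.1) := graph_eq q hq ▸ hqmin
    have hq1 : q.1 = x := huniq q.1 ⟨((hF q).1 hq).1, fun y hy => hqmin' (graph_mem y hy)⟩
    rw [graph_eq q hq, hq1]

noncomputable def requiredFrequency (a b N x : ℝ) : ℝ :=
  (N - a * x) / (b * x)

def feasibleTimes (a b N T B : ℝ) : Set ℝ :=
  Icc (N / (a + b * B)) T ∩ {x | a * x ≤ N}

section

variable {a b N T B : ℝ}

theorem strictConvexOn_requiredFrequency (hb : 0 < b) (hN : 0 < N) :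
    StrictConvexOn ℝ (Ioi 0) (requiredFrequency a b N) := by
  have hinv : StrictConvexOn ℝ (Ioi 0) fun x : ℝ => x ^ (-1 : ℤ) :=
    strictConvexOn_zpow (by norm_num) (by norm_num)
  refine ((hinv.const_mul_of_pos (div_pos hN hb)).add_const (-(a / b))).congr fun x hx => ?_
  have hx : x ≠ 0 := (mem_Ioi.1 hx).ne'
  simp only [requiredFrequency, Pi.add_apply, zpow_neg_one]
  field_simp
  ring

theorem strictConvexOn_resourceCost_requiredFrequency (Δt : ℝ) {Δb : ℝ} (hΔb : 0 < Δb)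
    (hb : 0 < b) (hN : 0 < N) :
    StrictConvexOn ℝ (Ioi 0) fun x => resourceCost Δt Δb (x, requiredFrequency a b N x) :=
  ((LinearMap.mulLeft ℝ Δt).convexOn (convex_Ioi 0)).add_strictConvexOn
    ((strictConvexOn_requiredFrequency hb hN).const_mul_of_pos hΔb)

theorem feasibleTimes_subset_Ioi (hN : 0 < N) (hab : 0 < a + b * B) :
    feasibleTimes a b N T B ⊆ Ioi 0 :=
  fun _ hx => (div_pos hN hab).trans_le hx.1.1

theorem mem_feasibleSet_iff (hb : 0 < b) (hN : 0 < N) (hab : 0 < a + b * B) (p : ℝ × ℝ) :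
    p ∈ feasibleSet a b N T B ↔
      p.1 ∈ feasibleTimes a b N T B ∧ p.2 = requiredFrequency a b N p.1 := by
  obtain ⟨x, y⟩ := p
  simp only [feasibleSet, feasibleTimes, requiredFrequency, mem_ofPred_eq, mem_inter_iff, mem_Icc,
    div_le_iff₀ hab]
  constructor
  · rintro ⟨hx, hxT, hy0, hyB, hload⟩
    refine ⟨⟨⟨by nlinarith [mul_le_mul_of_nonneg_left hyB (mul_pos hb hx).le], hxT⟩,
      by nlinarith [mul_nonneg (mul_pos hb hx).le hy0]⟩, ?_⟩
    rw [eq_div_iff (mul_pos hb hx).ne']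
    linarith
  · rintro ⟨⟨⟨hNx, hxT⟩, hax⟩, rfl⟩
    have hx : 0 < x := by nlinarith
    have hbx : 0 < b * x := mul_pos hb hx
    refine ⟨hx, hxT, div_nonneg (by linarith) hbx.le, ?_, ?_⟩
    · rw [div_le_iff₀ hbx]; linarith
    · field_simp; ring

theorem isCompact_feasibleTimes : IsCompact (feasibleTimes a b N T B) :=
  isCompact_Icc.inter_right (isClosed_le (continuous_const.mul continuous_id) continuous_const)

theorem convex_feasibleTimes : Convex ℝ (feasibleTimes a b N T B) :=
  (convex_Icc _ _).inter (convex_halfSpace_le (LinearMap.mulLeft ℝ a).isLinear N)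

theorem div_mem_feasibleTimes (hb : 0 < b) (hB : 0 ≤ B) (hN : 0 < N) (hab : 0 < a + b * B)
    (hle : N ≤ a * T + b * T * B) : N / (a + b * B) ∈ feasibleTimes a b N T B := by
  refine ⟨⟨le_rfl, ?_⟩, ?_⟩
  · rw [div_le_iff₀ hab]; linarith
  · show a * (N / (a + b * B)) ≤ N
    rw [mul_div_assoc', div_le_iff₀ hab]
    nlinarith [mul_nonneg (mul_nonneg hb.le hB) hN.le]

end

theorem constrained_scheduling_exists_unique_minimizer_general
    (Δt Δb a b N T B : ℝ) (hΔb : 0 < Δb)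
    (hb : 0 < b) (hN : 0 < N) (hT : 0 < T) (hB : 0 < B)
    (hle : N ≤ a * T + b * T * B) :
    ∃! p : ℝ × ℝ, p ∈ feasibleSet a b N T B ∧
      ∀ q ∈ feasibleSet a b N T B,
        resourceCost Δt Δb p ≤ resourceCost Δt Δb q := by
  have hab : 0 < a + b * B := pos_of_mul_pos_left (by linarith : 0 < (a + b * B) * T) hT.le
  have hcost : StrictConvexOn ℝ (Ioi 0)
      fun x => resourceCost Δt Δb (x, requiredFrequency a b N x) :=
    strictConvexOn_resourceCost_requiredFrequency Δt hΔb hb hN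
  have hsub : feasibleTimes a b N T B ⊆ Ioi 0 := feasibleTimes_subset_Ioi hN hab
  refine existsUnique_isMinOn_of_mem_iff_graph (c := resourceCost Δt Δb)
    (mem_feasibleSet_iff hb hN hab) ?_
  exact (hcost.subset hsub convex_feasibleTimes).existsUnique_isMinOn
    ((hcost.convexOn.continuousOn isOpen_Ioi).mono hsub) isCompact_feasibleTimes
    ⟨_, div_mem_feasibleTimes hb hB.le hN hab hle⟩

/-- Constrained universal resource scheduling: whenever
`0 < N ≤ a·T̃ + b·T̃·B̃`, the cost `c` attains its minimum over `F` at a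
unique point. -/
theorem constrained_scheduling_exists_unique_minimizer
    (Δt Δb a b N T B : ℝ) (hΔt : 0 < Δt) (hΔb : 0 < Δb)
    (ha : 0 < a) (hb : 0 < b) (hN : 0 < N) (hT : 0 < T) (hB : 0 < B)
    (hle : N ≤ a * T + b * T * B) :
    ∃! p : ℝ × ℝ, p ∈ feasibleSet a b N T B ∧
      ∀ q ∈ feasibleSet a b N T B,
        resourceCost Δt Δb p ≤ resourceCost Δt Δb q :=
  constrained_scheduling_exists_unique_minimizer_general Δt Δb a b N T B hΔb hb hN hT hB hle
end
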